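/- arXiv:2502.02860 — 4 statements merged into one kernel-verified Lean document; each statement's English description precedes it below -/
import Mathlib

section
/- For an n×n positive semidefinite Hermitian matrix P with diagonal entries d₁,...,dₙ and eigenvalues λ₁,...,λₙ, the vector of diagonal entries is majorized by the vector of eigenvalues. -/
open Matrix Finset
open scoped Kronecker

/-- Sort a finite real vector in descending order. -/
noncomputable def dsort {d : ℕ} (v : Fin d → ℝ) : Fin d → ℝ :=
  fun i => v (Tuple.sort v i.rev)

/-- Battery capacity functional for descending-ordered vectors:
`cap λ ε = ∑ i, ε i * (λ i - λ (d-1-i))`. -/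
noncomputable def cap {d : ℕ} (lam eps : Fin d → ℝ) : ℝ :=
  ∑ i, eps i * (lam i - lam i.rev)

/-- Eigenvalues of a Hermitian matrix, in descending order. -/
noncomputable def eigsDesc {m : Type*} [Fintype m] [DecidableEq m] {A : Matrix m m ℂ}
    (hA : A.IsHermitian) : Fin (Fintype.card m) → ℝ :=
  dsort (hA.eigenvalues ∘ (Fintype.equivFin m).symm)

open scoped Classical in
/-- Quantum battery capacity `C(ρ; H)` (defaults to `0` on non-Hermitian inputs). -/
noncomputable def Cap {m : Type*} [Fintype m] [DecidableEq m] (ρ H : Matrix m m ℂ) : ℝ :=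
  if hρ : ρ.IsHermitian then
    if hH : H.IsHermitian then cap (eigsDesc hρ) (eigsDesc hH) else 0
  else 0

/-- Majorization `x ≺ y` of real vectors. -/
noncomputable def Maj {d : ℕ} (x y : Fin d → ℝ) : Prop :=
  (∀ k : ℕ, ∑ i : Fin d, (if (i : ℕ) < k then dsort x i else 0)
      ≤ ∑ i : Fin d, (if (i : ℕ) < k then dsort y i else 0)) ∧
  ∑ i, x i = ∑ i, y i

def σ1 : Matrix (Fin 2) (Fin 2) ℂ := !![0, 1; 1, 0]
def σ3 : Matrix (Fin 2) (Fin 2) ℂ := !![1, 0; 0, -1]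

open scoped ComplexOrder

/-!
Diagonalize `P = U diag(λ) Uᴴ`. Then `P i i = ∑ j, |U i j|² λ j`, and the matrix `(|U i j|²)` is
doubly stochastic because `U` is unitary. A doubly stochastic image `Q λ` is majorized by `λ`:
the sum of any `k` entries of `Q λ` is `∑ l, c l * λ l` with weights `0 ≤ c l ≤ 1` summing to `k`,
and such a combination is at most the sum of the `k` largest entries of `λ`.
-/

section Majorization

variable {d : ℕ}

lemma antitone_dsort (v : Fin d → ℝ) : Antitone (dsort v) :=
  fun _ _ hij => Tuple.monotone_sort v (Fin.rev_le_rev.mpr hij)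

noncomputable def topSum (k : ℕ) (v : Fin d → ℝ) : ℝ :=
  ∑ i : Fin d, if (i : ℕ) < k then dsort v i else 0

lemma sum_mul_le_sum_ite_lt_of_antitone {w c : Fin d → ℝ} (hw : Antitone w)
    (hc0 : ∀ i, 0 ≤ c i) (hc1 : ∀ i, c i ≤ 1) {k : ℕ}
    (hc : ∑ i, c i = #{i : Fin d | (i : ℕ) < k}) :
    ∑ i, c i * w i ≤ ∑ i : Fin d, if (i : ℕ) < k then w i else 0 := by
  rcases d.eq_zero_or_pos with rfl | hd
  · simp
  -- Since `∑ i, (c i - e i) = 0`, the difference of the two sides is `∑ i, (c i - e i) * (w i - w p)`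
  -- for any pivot `p`; choosing `p` between the indices `< k` and those `≥ k` makes every term `≤ 0`.
  obtain ⟨p, hp⟩ : ∃ p : Fin d, (p : ℕ) = min k (d - 1) := ⟨⟨_, by omega⟩, rfl⟩
  set e : Fin d → ℝ := fun i => if (i : ℕ) < k then 1 else 0
  have term_nonpos (i : Fin d) : (c i - e i) * (w i - w p) ≤ 0 := by
    by_cases hik : (i : ℕ) < k
    · have : i ≤ p := by rw [Fin.le_def]; omega
      exact mul_nonpos_of_nonpos_of_nonneg (by simp [e, hik, hc1]) (by linarith [hw this])
    · have : p ≤ i := by rw [Fin.le_def]; omega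
      exact mul_nonpos_of_nonneg_of_nonpos (by simp [e, hik, hc0]) (by linarith [hw this])
  have sum_e : ∑ i, e i = ∑ i, c i := by rw [hc, sum_boole]
  calc ∑ i, c i * w i
      = ∑ i, (c i - e i) * (w i - w p) + ∑ i, e i * w i + (∑ i, c i - ∑ i, e i) * w p := by
        simp only [sub_mul, sum_mul, ← sum_sub_distrib, ← sum_add_distrib]
        exact sum_congr rfl fun i _ => by ring
    _ ≤ ∑ i : Fin d, if (i : ℕ) < k then w i else 0 := by
        rw [sum_e, sub_self, zero_mul, add_zero]
        simpa [e] using sum_nonpos fun i (_ : i ∈ univ) => term_nonpos i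

lemma dotProduct_le_topSum {c : Fin d → ℝ} (y : Fin d → ℝ) (hc0 : ∀ i, 0 ≤ c i)
    (hc1 : ∀ i, c i ≤ 1) {k : ℕ} (hc : ∑ i, c i = #{i : Fin d | (i : ℕ) < k}) :
    c ⬝ᵥ y ≤ topSum k y := by
  let σ : Equiv.Perm (Fin d) := Fin.revPerm.trans (Tuple.sort y)
  calc c ⬝ᵥ y = ∑ i, c (σ i) * dsort y i := (Equiv.sum_comp σ fun j => c j * y j).symm
    _ ≤ topSum k y :=
      sum_mul_le_sum_ite_lt_of_antitone (antitone_dsort y) (fun _ => hc0 _)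
        (fun _ => hc1 _) (by rwa [Equiv.sum_comp σ c])

lemma exists_topSum_eq_dotProduct (k : ℕ) (v : Fin d → ℝ) :
    ∃ e : Fin d → ℝ, (∀ i, 0 ≤ e i) ∧ (∀ i, e i ≤ 1) ∧
      ∑ i, e i = #{i : Fin d | (i : ℕ) < k} ∧ topSum k v = e ⬝ᵥ v := by
  let σ : Equiv.Perm (Fin d) := Fin.revPerm.trans (Tuple.sort v)
  let e : Fin d → ℝ := fun j => if ((σ.symm j : Fin d) : ℕ) < k then 1 else 0
  refine ⟨e, fun j => by positivity, fun j => by simp only [e]; split_ifs <;> norm_num, ?_, ?_⟩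
  · rw [← Equiv.sum_comp σ e, sum_boole]
    simp
  · rw [topSum, dotProduct]
    conv_rhs => rw [← Equiv.sum_comp σ]
    simp only [e, Equiv.symm_apply_apply, ite_mul, one_mul, zero_mul]
    rfl

theorem maj_mulVec_of_mem_doublyStochastic {Q : Matrix (Fin d) (Fin d) ℝ}
    (hQ : Q ∈ doublyStochastic ℝ (Fin d)) (y : Fin d → ℝ) : Maj (Q *ᵥ y) y := by
  refine ⟨fun k => ?_, sum_mulVec_of_mem_doublyStochastic hQ⟩
  obtain ⟨e, he0, he1, he, htop⟩ := exists_topSum_eq_dotProduct k (Q *ᵥ y)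
  change topSum k (Q *ᵥ y) ≤ topSum k y
  rw [htop, dotProduct_mulVec]
  refine dotProduct_le_topSum y (fun l => ?_) (fun l => ?_) ?_
  · change 0 ≤ ∑ j, e j * Q j l
    exact sum_nonneg fun j _ => mul_nonneg (he0 j) (nonneg_of_mem_doublyStochastic hQ)
  · calc (e ᵥ* Q) l = ∑ j, e j * Q j l := rfl
      _ ≤ ∑ j, Q j l := sum_le_sum fun j _ =>
          mul_le_of_le_one_left (nonneg_of_mem_doublyStochastic hQ) (he1 j)
      _ = 1 := sum_col_of_mem_doublyStochastic hQ l
  · rw [← mulVec_transpose, sum_mulVec_of_mem_doublyStochastic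
      (transpose_mem_doublyStochastic_iff.mpr hQ), he]

end Majorization

section Unitary

variable {𝕜 n : Type*} [RCLike 𝕜] [Fintype n]

lemma mul_conjTranspose_apply_self (U : Matrix n n 𝕜) (i : n) :
    (U * Uᴴ : Matrix n n 𝕜) i i = ((∑ j, ‖U i j‖ ^ 2 : ℝ) : 𝕜) := by
  simp [mul_apply, RCLike.mul_conj]

lemma conjTranspose_mul_apply_self (U : Matrix n n 𝕜) (j : n) :
    (Uᴴ * U : Matrix n n 𝕜) j j = ((∑ i, ‖U i j‖ ^ 2 : ℝ) : 𝕜) := by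
  simp [mul_apply, RCLike.conj_mul]

lemma mul_diagonal_mul_conjTranspose_apply_self [DecidableEq n] (U : Matrix n n 𝕜) (d : n → ℝ)
    (i : n) : (U * diagonal (RCLike.ofReal ∘ d) * Uᴴ : Matrix n n 𝕜) i i =
      ((∑ j, ‖U i j‖ ^ 2 * d j : ℝ) : 𝕜) := by
  rw [mul_apply]
  simp only [mul_diagonal, conjTranspose_apply, Function.comp_apply, RCLike.ofReal_sum,
    RCLike.ofReal_mul, RCLike.ofReal_pow]
  refine sum_congr rfl fun j _ => ?_
  rw [← RCLike.mul_conj, RCLike.star_def]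
  ring

variable [DecidableEq n]

lemma sq_norm_mem_doublyStochastic_of_mem_unitaryGroup {U : Matrix n n 𝕜}
    (hU : U ∈ unitaryGroup n 𝕜) : of (fun i j => ‖U i j‖ ^ 2) ∈ doublyStochastic ℝ n := by
  refine mem_doublyStochastic_iff_sum.mpr ⟨fun i j => sq_nonneg _, fun i => ?_, fun j => ?_⟩
  · have h := mul_conjTranspose_apply_self U i
    rw [← star_eq_conjTranspose, mem_unitaryGroup_iff.mp hU, one_apply_eq] at h
    exact_mod_cast h.symm
  · have h := conjTranspose_mul_apply_self U j
    rw [← star_eq_conjTranspose, mem_unitaryGroup_iff'.mp hU, one_apply_eq] at h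
    exact_mod_cast h.symm

lemma Matrix.IsHermitian.re_diag_eq_mulVec_eigenvalues {A : Matrix n n 𝕜} (hA : A.IsHermitian) :
    (fun i => RCLike.re (A i i)) =
      of (fun i j => ‖(hA.eigenvectorUnitary : Matrix n n 𝕜) i j‖ ^ 2) *ᵥ hA.eigenvalues := by
  ext i
  conv_lhs => rw [hA.spectral_theorem, Unitary.conjStarAlgAut_apply, star_eq_conjTranspose]
  rw [mul_diagonal_mul_conjTranspose_apply_self, RCLike.ofReal_re]
  rfl

end Unitary

/-- Schur–Horn: the diagonal of a positive semidefinite Hermitian matrix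
is majorized by its eigenvalues. -/
theorem diag_majorized_by_eigenvalues (n : ℕ) (P : Matrix (Fin n) (Fin n) ℂ)
    (hP : P.PosSemidef) :
    Maj (fun i => (P i i).re) hP.isHermitian.eigenvalues := by
  have hdiag := hP.isHermitian.re_diag_eq_mulVec_eigenvalues
  have hQ := sq_norm_mem_doublyStochastic_of_mem_unitaryGroup hP.isHermitian.eigenvectorUnitary.2
  exact hdiag ▸ maj_mulVec_of_mem_doublyStochastic hQ _
end

section
/- If a real vector x is majorized by y, with entries of both sorted in descending order as x₀ ≥ ... ≥ x_{d-1} and y₀ ≥ ... ≥ y_{d-1}, and ε₀ ≥ ε₁ ≥ ... ≥ ε_{d-1} are real numbers, then Σᵢ εᵢ(xᵢ − x_{d-1-i}) ≤ Σᵢ εᵢ(yᵢ − y_{d-1-i}). -/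
open Matrix Finset
open scoped Kronecker

open scoped ComplexOrder

lemma dsort_of_antitone {d : ℕ} {v : Fin d → ℝ} (hv : Antitone v) : dsort v = v := by
  have hmono : Monotone (v ∘ (Fin.revPerm : Equiv.Perm (Fin d))) := by
    intro a b hab
    exact hv (by simpa using Fin.rev_le_rev.2 hab)
  have h := (Tuple.comp_sort_eq_comp_iff_monotone (f := v) (σ := Fin.revPerm)).2 hmono
  funext i
  have h2 := congrFun h.symm i.rev
  simpa [dsort, Fin.rev_rev] using h2

lemma cap_eq {d : ℕ} (v eps : Fin d → ℝ) :
    cap v eps = ∑ i, (eps i - eps i.rev) * v i := by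
  have h : ∑ i, eps i * v i.rev = ∑ i, eps i.rev * v i := by
    have := Equiv.sum_comp (Fin.revPerm : Equiv.Perm (Fin d)) (fun i => eps i * v i.rev)
    simpa [Fin.rev_rev] using this.symm
  simp only [cap, mul_sub, Finset.sum_sub_distrib, h, sub_mul]


/-- Schur-convexity of the capacity functional: if `x` is majorized by `y`
(both given in descending order) and `eps` is descending, then
`cap x eps ≤ cap y eps`. -/
theorem cap_schur_convex (d : ℕ) (x y eps : Fin d → ℝ)
    (hx : Antitone x) (hy : Antitone y) (he : Antitone eps) (hmaj : Maj x y) :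
    cap x eps ≤ cap y eps := by
  obtain ⟨hpart, hsum⟩ := hmaj
  rw [dsort_of_antitone hx, dsort_of_antitone hy] at hpart
  -- extensions to ℕ
  set X : ℕ → ℝ := fun j => if h : j < d then x ⟨j, h⟩ else 0 with hX
  set Y : ℕ → ℝ := fun j => if h : j < d then y ⟨j, h⟩ else 0 with hY
  set E : ℕ → ℝ := fun j => if h : j < d then eps ⟨j, h⟩ - eps (Fin.rev ⟨j, h⟩) else 0 with hE
  have key : ∀ (v : Fin d → ℝ) (V : ℕ → ℝ),
      (V = fun j => if h : j < d then v ⟨j, h⟩ else 0) →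
      (cap v eps = ∑ i ∈ range d, E i * V i) ∧
      (∀ k, k ≤ d → ∑ j ∈ range k, V j = ∑ i : Fin d, (if (i : ℕ) < k then v i else 0)) := by
    intro v V hV
    constructor
    · rw [cap_eq]
      rw [← Fin.sum_univ_eq_sum_range (fun j => E j * V j) d]
      apply Finset.sum_congr rfl
      intro i _
      simp [hE, hV, i.isLt]
    · intro k hk
      have h1 : (∑ i : Fin d, if (i : ℕ) < k then v i else 0)
          = ∑ j ∈ range d, (if j < k then V j else 0) := by
        rw [← Fin.sum_univ_eq_sum_range (fun j => if j < k then V j else 0) d]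
        apply Finset.sum_congr rfl
        intro i _
        simp [hV, i.isLt]
      have hfilt : (range d).filter (· < k) = range k := by
        ext j; simp only [Finset.mem_filter, Finset.mem_range]; omega
      rw [h1, ← Finset.sum_filter, hfilt]
  obtain ⟨hcapx, hSX⟩ := key x X hX
  obtain ⟨hcapy, hSY⟩ := key y Y hY
  -- by-parts
  have hbpx := Finset.sum_range_by_parts E X d
  have hbpy := Finset.sum_range_by_parts E Y d
  simp only [smul_eq_mul] at hbpx hbpy
  rw [hcapx, hcapy, hbpx, hbpy]
  -- totals equal
  have htot : ∑ i ∈ range d, X i = ∑ i ∈ range d, Y i := by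
    have h1 := hSX d le_rfl
    have h2 := hSY d le_rfl
    rw [h1, h2]
    simpa [Fin.is_lt] using hsum
  rw [htot]
  apply sub_le_sub_left
  apply Finset.sum_le_sum
  intro i hi
  have hid : i + 1 < d := by
    have := Finset.mem_range.1 hi; omega
  have hcoef : E (i + 1) - E i ≤ 0 := by
    have h1 : (⟨i, by omega⟩ : Fin d) ≤ ⟨i + 1, hid⟩ := by simp
    have h2 : (⟨i + 1, hid⟩ : Fin d).rev ≤ (⟨i, by omega⟩ : Fin d).rev :=
      Fin.rev_le_rev.2 h1
    have he1 := he h1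
    have he2 := he h2
    simp only [hE, hid, dif_pos, show i < d by omega]
    linarith
  have hS : ∑ j ∈ range (i + 1), X j ≤ ∑ j ∈ range (i + 1), Y j := by
    rw [hSX (i + 1) (by omega), hSY (i + 1) (by omega)]
    exact hpart (i + 1)
  exact mul_le_mul_of_nonpos_left hS hcoef
end

section
/- For a diagonal two-qubit density matrix whose diagonal entries satisfy ρ₁₁ ≥ ρ₂₂ ≥ ρ₃₃ ≥ ρ₄₄, and interaction-free Hamiltonian (γ = 0), equality holds in the monogamy relation: C(ρ_A; H_A) + C(ρ_B; H_B) = C(ρ; H_AB). -/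
open Matrix Finset
open scoped Kronecker

open scoped ComplexOrder

/-- The two-qubit Hamiltonian of Eq. (3). -/
noncomputable def HAB (eA eB g : ℝ) : Matrix (Fin 2 × Fin 2) (Fin 2 × Fin 2) ℂ :=
  (eA : ℂ) • (σ3 ⊗ₖ (1 : Matrix (Fin 2) (Fin 2) ℂ)) +
  (eB : ℂ) • ((1 : Matrix (Fin 2) (Fin 2) ℂ) ⊗ₖ σ3) +
  (g : ℂ) • (σ1 ⊗ₖ σ1)

/-!
All matrices involved are diagonal, so their eigenvalues are their diagonal entries, and under
the assumed orderings these entries are already in descending order (for `H_AB` because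
`ε^A + ε^B ≥ ε^A - ε^B ≥ -(ε^A - ε^B) ≥ -(ε^A + ε^B)`). The capacities are then explicit:
`C(ρ; H_AB) = 2(ε^A + ε^B)(ρ₁₁ - ρ₄₄) + 2(ε^A - ε^B)(ρ₂₂ - ρ₃₃)`,
`C(ρ_A; H_A) = 2ε^A(ρ₁₁ + ρ₂₂ - ρ₃₃ - ρ₄₄)` and `C(ρ_B; H_B) = 2ε^B(ρ₁₁ - ρ₂₂ + ρ₃₃ - ρ₄₄)`,
and the last two add up to the first.
-/

theorem dsort_comp_perm {d : ℕ} (v : Fin d → ℝ) (σ : Equiv.Perm (Fin d)) :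
    dsort (v ∘ σ) = dsort v :=
  funext fun i => congrFun (Tuple.comp_perm_comp_sort_eq_comp_sort (σ := σ)) i.rev

theorem dsort_eq_self_of_antitone {d : ℕ} {w : Fin d → ℝ} (hw : Antitone w) : dsort w = w := by
  have hmono : Monotone (w ∘ Fin.revPerm) := fun a b hab => hw (Fin.rev_le_rev.mpr hab)
  have hsort : w ∘ Tuple.sort w = w ∘ Fin.revPerm := by
    rw [← Tuple.comp_perm_comp_sort_eq_comp_sort (σ := Fin.revPerm),
      Tuple.sort_eq_refl_iff_monotone.mpr hmono]
    rfl
  funext i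
  simpa [dsort] using congrFun hsort i.rev

theorem isHermitian_diagonal_ofReal {n : Type*} [DecidableEq n] (v : n → ℝ) :
    (diagonal fun i => (v i : ℂ)).IsHermitian :=
  isHermitian_diagonal_of_self_adjoint _ (funext fun i => Complex.conj_ofReal (v i))

section Diagonal

variable {n : Type*} [Fintype n] [DecidableEq n]

theorem eigsDesc_eq_eigenvalues₀ {A : Matrix n n ℂ} (hA : A.IsHermitian) :
    eigsDesc hA = hA.eigenvalues₀ := by
  rw [← dsort_eq_self_of_antitone hA.eigenvalues₀_antitone, eigsDesc]
  exact dsort_comp_perm _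
    ((Fintype.equivFin n).symm.trans (Fintype.equivOfCardEq (Fintype.card_fin _)).symm)

theorem ofFn_eigenvalues₀_diagonal {v : n → ℝ}
    (hA : (diagonal fun i => (v i : ℂ)).IsHermitian) :
    List.ofFn hA.eigenvalues₀ = (univ.val.map v).sort (· ≥ ·) := by
  rw [← hA.sort_roots_charpoly_eq_eigenvalues₀, charpoly_diagonal,
    Polynomial.roots_prod _ _ (by simp [prod_ne_zero_iff, Polynomial.X_sub_C_ne_zero])]
  simp

theorem eigenvalues₀_diagonal_eq {v : n → ℝ} (hA : (diagonal fun i => (v i : ℂ)).IsHermitian)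
    {w : Fin (Fintype.card n) → ℝ} (hw : Antitone w)
    (hvw : univ.val.map v = ↑(List.ofFn w)) :
    hA.eigenvalues₀ = w := by
  apply List.ofFn_injective
  rw [ofFn_eigenvalues₀_diagonal, hvw, Multiset.coe_sort]
  exact List.mergeSort_eq_self _ hw.sortedGE_ofFn.pairwise

theorem Cap_diagonal_eq_cap {v ε : n → ℝ} {w u : Fin (Fintype.card n) → ℝ}
    (hw : Antitone w) (hu : Antitone u)
    (hvw : univ.val.map v = ↑(List.ofFn w)) (hεu : univ.val.map ε = ↑(List.ofFn u)) :
    Cap (diagonal fun i => (v i : ℂ)) (diagonal fun i => (ε i : ℂ)) = cap w u := by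
  rw [Cap, dif_pos (isHermitian_diagonal_ofReal v), dif_pos (isHermitian_diagonal_ofReal ε),
    eigsDesc_eq_eigenvalues₀, eigsDesc_eq_eigenvalues₀, eigenvalues₀_diagonal_eq _ hw hvw,
    eigenvalues₀_diagonal_eq _ hu hεu]

end Diagonal

theorem univ_val_map_fin_two_prod {α : Type*} (f : Fin 2 → Fin 2 → α) :
    univ.val.map (fun x : Fin 2 × Fin 2 => f x.1 x.2) =
      ↑(List.ofFn ![f 0 0, f 0 1, f 1 0, f 1 1]) :=
  rfl

theorem smul_σ3_eq_diagonal (e : ℝ) :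
    (e : ℂ) • σ3 = diagonal fun i => ((![e, -e] i : ℝ) : ℂ) := by
  ext i j
  fin_cases i <;> fin_cases j <;> simp [σ3]

theorem HAB_zero_eq_diagonal (eA eB : ℝ) :
    HAB eA eB 0 = diagonal fun x : Fin 2 × Fin 2 =>
      ((![![eA + eB, eA - eB], ![-(eA - eB), -(eA + eB)]] x.1 x.2 : ℝ) : ℂ) := by
  ext ⟨i, j⟩ ⟨k, l⟩
  fin_cases i <;> fin_cases j <;> fin_cases k <;> fin_cases l <;>
    simp [HAB, σ3, one_apply, sub_eq_add_neg, add_comm]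

theorem cap_vec_two (a b e f : ℝ) : cap ![a, b] ![e, f] = (e - f) * (a - b) := by
  simp only [cap, Fin.sum_univ_two, Fin.reduceRev, Fin.rev_zero, Fin.reduceLast, cons_val_zero,
    cons_val_one, cons_val_fin_one]
  ring

theorem cap_vec_four (a b c d e f g h : ℝ) :
    cap ![a, b, c, d] ![e, f, g, h] = (e - h) * (a - d) + (f - g) * (b - c) := by
  simp only [cap, Fin.sum_univ_four, Fin.reduceRev, Fin.rev_zero, Fin.reduceLast, cons_val_zero,
    cons_val_one, Matrix.cons_val]
  ring

theorem capacity_monogamy_equality_general (p00 p01 p10 p11 eA eB : ℝ)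
    (hord1 : p00 ≥ p01) (hord2 : p01 ≥ p10) (hord3 : p10 ≥ p11)
    (hAB : eA ≥ eB) (hB : eB ≥ 0) :
    Cap (Matrix.diagonal (fun a : Fin 2 => ((![p00 + p01, p10 + p11] a : ℝ) : ℂ)))
        ((eA : ℂ) • σ3) +
    Cap (Matrix.diagonal (fun b : Fin 2 => ((![p00 + p10, p01 + p11] b : ℝ) : ℂ)))
        ((eB : ℂ) • σ3) =
    Cap (Matrix.diagonal (fun x : Fin 2 × Fin 2 => ((![![p00, p01], ![p10, p11]] x.1 x.2 : ℝ) : ℂ)))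
        (HAB eA eB 0) := by
  have antitone_two {a b : ℝ} (h : b ≤ a) : Antitone ![a, b] :=
    Fin.antitone_iff_succ_le.2 fun i => by fin_cases i; simpa
  have antitone_four {a b c d : ℝ} (hab : b ≤ a) (hbc : c ≤ b) (hcd : d ≤ c) :
      Antitone ![a, b, c, d] :=
    Fin.antitone_iff_succ_le.2 fun i => by fin_cases i <;> simpa
  rw [smul_σ3_eq_diagonal, smul_σ3_eq_diagonal, HAB_zero_eq_diagonal,
    Cap_diagonal_eq_cap (antitone_two (by linarith)) (antitone_two (by linarith))
      (Fin.univ_val_map _) (Fin.univ_val_map _),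
    Cap_diagonal_eq_cap (antitone_two (by linarith)) (antitone_two (by linarith))
      (Fin.univ_val_map _) (Fin.univ_val_map _),
    Cap_diagonal_eq_cap (w := ![p00, p01, p10, p11])
      (u := ![eA + eB, eA - eB, -(eA - eB), -(eA + eB)])
      (antitone_four hord1 hord2 hord3) (antitone_four (by linarith) (by linarith) (by linarith))
      (univ_val_map_fin_two_prod _) (univ_val_map_fin_two_prod _)]
  -- `Fintype.card (Fin 2)` is only definitionally `2`, so the index types are fixed by hand.
  change cap (d := 2) _ _ + cap (d := 2) _ _ = cap (d := 4) _ _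
  rw [cap_vec_two, cap_vec_two, cap_vec_four]
  ring

/-- Equality case: for a diagonal two-qubit density matrix with
`ρ₁₁ ≥ ρ₂₂ ≥ ρ₃₃ ≥ ρ₄₄` and interaction-free Hamiltonian, the monogamy
relation is an equality. -/
theorem capacity_monogamy_equality (p00 p01 p10 p11 eA eB : ℝ)
    (h11 : 0 ≤ p11) (hsum : p00 + p01 + p10 + p11 = 1)
    (hord1 : p00 ≥ p01) (hord2 : p01 ≥ p10) (hord3 : p10 ≥ p11)
    (hAB : eA ≥ eB) (hB : eB ≥ 0) :
    Cap (Matrix.diagonal (fun a : Fin 2 => ((![p00 + p01, p10 + p11] a : ℝ) : ℂ)))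
        ((eA : ℂ) • σ3) +
    Cap (Matrix.diagonal (fun b : Fin 2 => ((![p00 + p10, p01 + p11] b : ℝ) : ℂ)))
        ((eB : ℂ) • σ3) =
    Cap (Matrix.diagonal (fun x : Fin 2 × Fin 2 => ((![![p00, p01], ![p10, p11]] x.1 x.2 : ℝ) : ℂ)))
        (HAB eA eB 0) :=
  capacity_monogamy_equality_general p00 p01 p10 p11 eA eB hord1 hord2 hord3 hAB hB
end

section
/- Let ρ_AB be a two-qubit X-state with ρ₁₁ ≥ ρ₂₂ ≥ ρ₄₄ > ρ₃₃, and let U be the permutation unitary swapping basis vectors |10⟩ and |11⟩. Then the reduced states of ρ̃ = UρU† satisfy C(ρ̃_A; H_A) ≥ C(ρ_A; H_A) and C(ρ̃_B; H_B) ≥ C(ρ_B; H_B), i.e., subsystem capacity gain is achieved. -/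
open Matrix Finset
open scoped Kronecker

open scoped ComplexOrder

/-- Partial trace over the second qubit. -/
noncomputable def ptA (ρ : Matrix (Fin 2 × Fin 2) (Fin 2 × Fin 2) ℂ) :
    Matrix (Fin 2) (Fin 2) ℂ :=
  fun a c => ∑ b : Fin 2, ρ (a, b) (c, b)

/-- Partial trace over the first qubit. -/
noncomputable def ptB (ρ : Matrix (Fin 2 × Fin 2) (Fin 2 × Fin 2) ℂ) :
    Matrix (Fin 2) (Fin 2) ℂ :=
  fun b d => ∑ a : Fin 2, ρ (a, b) (a, d)

/-- The permutation unitary swapping the basis vectors `|10⟩` and `|11⟩`. -/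
noncomputable def Uswap : Matrix (Fin 2 × Fin 2) (Fin 2 × Fin 2) ℂ :=
  fun i j => if i = Equiv.swap ((1 : Fin 2), (0 : Fin 2)) ((1 : Fin 2), (1 : Fin 2)) j
    then 1 else 0

/-!
For a Hermitian `2 × 2` matrix `M` the eigenvalue gap is
`μ₀ - μ₁ = √((M₀₀ - M₁₁)² + 4 |M₀₁|²)`, and `C(M; H)` is the product of the gaps of `H` and `M`,
so for a fixed Hamiltonian the capacity is monotone in this discriminant. Conjugation by `U`
permutes the entries of `ρ`. On `A` the diagonals of `ρ_A` and `ρ̃_A` agree while only `ρ̃_A` has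
the off-diagonal entry `ρ₁₄ + ρ₂₃`. On `B` both reduced states are diagonal, and
`(ρ₁₁ + ρ₄₄ - ρ₂₂ - ρ₃₃)² - (ρ₁₁ + ρ₃₃ - ρ₂₂ - ρ₄₄)² = 4 (ρ₁₁ - ρ₂₂) (ρ₄₄ - ρ₃₃) ≥ 0`.
-/

lemma sub_sq_fin_two (v : Fin 2 → ℝ) : (v 0 - v 1) ^ 2 = (∑ i, v i) ^ 2 - 4 * ∏ i, v i := by
  simp only [Fin.sum_univ_two, Fin.prod_univ_two]
  ring

lemma dsort_zero_sub_one (v : Fin 2 → ℝ) :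
    dsort v 0 - dsort v 1 = √((∑ i, v i) ^ 2 - 4 * ∏ i, v i) := by
  set σ : Equiv.Perm (Fin 2) := Fin.revPerm.trans (Tuple.sort v)
  have hsorted : dsort v 1 ≤ dsort v 0 := Tuple.monotone_sort v (by decide)
  have hsum : ∑ i, dsort v i = ∑ i, v i := Equiv.sum_comp σ v
  have hprod : ∏ i, dsort v i = ∏ i, v i := Equiv.prod_comp σ v
  rw [← hsum, ← hprod, ← sub_sq_fin_two, Real.sqrt_sq (sub_nonneg.2 hsorted)]

def eigenGapSq (M : Matrix (Fin 2) (Fin 2) ℂ) : ℝ :=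
  ((M 0 0).re - (M 1 1).re) ^ 2 + 4 * Complex.normSq (M 0 1)

lemma Matrix.IsHermitian.trace_sq_sub_four_det_fin_two {A : Matrix (Fin 2) (Fin 2) ℂ}
    (hA : A.IsHermitian) : A.trace.re ^ 2 - 4 * A.det.re = eigenGapSq A := by
  have h10 : A 1 0 = star (A 0 1) := (hA.apply 1 0).symm
  have h00 : (A 0 0).im = 0 := Complex.conj_eq_iff_im.mp (hA.apply 0 0)
  have h11 : (A 1 1).im = 0 := Complex.conj_eq_iff_im.mp (hA.apply 1 1)
  rw [trace_fin_two, det_fin_two, h10, eigenGapSq, Complex.star_def, Complex.mul_conj]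
  simp only [Complex.add_re, Complex.sub_re, Complex.mul_re, Complex.ofReal_re, h00, h11]
  ring

lemma Matrix.IsHermitian.eigsDesc_zero_sub_one {A : Matrix (Fin 2) (Fin 2) ℂ}
    (hA : A.IsHermitian) : eigsDesc hA 0 - eigsDesc hA 1 = √(eigenGapSq A) := by
  let e : Fin 2 → ℝ := hA.eigenvalues ∘ (Fintype.equivFin (Fin 2)).symm
  have hsum : ∑ i, e i = A.trace.re := by
    rw [hA.trace_eq_sum_eigenvalues, ← RCLike.ofReal_sum]
    exact (Equiv.sum_comp (Fintype.equivFin (Fin 2)).symm hA.eigenvalues).trans (by simp)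
  have hprod : ∏ i, e i = A.det.re := by
    rw [hA.det_eq_prod_eigenvalues, ← RCLike.ofReal_prod]
    exact (Equiv.prod_comp (Fintype.equivFin (Fin 2)).symm hA.eigenvalues).trans (by simp)
  rw [← hA.trace_sq_sub_four_det_fin_two, ← hsum, ← hprod]
  exact dsort_zero_sub_one e

lemma cap_fin_two (lam eps : Fin 2 → ℝ) : cap lam eps = (eps 0 - eps 1) * (lam 0 - lam 1) := by
  simp only [cap, Fin.sum_univ_two, Fin.isValue, Fin.rev_zero, Fin.reduceLast, Fin.reduceRev]
  ring

lemma Cap_fin_two {M H : Matrix (Fin 2) (Fin 2) ℂ} (hM : M.IsHermitian) (hH : H.IsHermitian) :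
    Cap M H = √(eigenGapSq H) * √(eigenGapSq M) := by
  rw [Cap, dif_pos hM, dif_pos hH, ← hM.eigsDesc_zero_sub_one, ← hH.eigsDesc_zero_sub_one]
  exact cap_fin_two _ _

lemma Cap_le_Cap_of_eigenGapSq_le {M N H : Matrix (Fin 2) (Fin 2) ℂ} (hM : M.IsHermitian)
    (hN : N.IsHermitian) (hH : H.IsHermitian) (h : eigenGapSq M ≤ eigenGapSq N) :
    Cap M H ≤ Cap N H := by
  rw [Cap_fin_two hM hH, Cap_fin_two hN hH]
  exact mul_le_mul_of_nonneg_left (Real.sqrt_le_sqrt h) (Real.sqrt_nonneg _)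

lemma Matrix.permMatrix_mul_mul_conjTranspose_permMatrix {n R : Type*} [Fintype n] [DecidableEq n]
    [NonAssocSemiring R] [StarRing R] (σ : Equiv.Perm n) (M : Matrix n n R) :
    σ.permMatrix R * M * (σ.permMatrix R)ᴴ = M.submatrix σ σ := by
  rw [conjTranspose_permMatrix, PEquiv.toMatrix_toPEquiv_mul, PEquiv.mul_toMatrix_toPEquiv]
  rfl

lemma isHermitian_σ3 : σ3.IsHermitian := by
  ext i j
  fin_cases i <;> fin_cases j <;> simp [σ3]

lemma Matrix.IsHermitian.ptA {ρ : Matrix (Fin 2 × Fin 2) (Fin 2 × Fin 2) ℂ} (h : ρ.IsHermitian) :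
    (ptA ρ).IsHermitian := by
  ext a c
  simp only [conjTranspose_apply, _root_.ptA, star_sum, h.apply]

lemma Matrix.IsHermitian.ptB {ρ : Matrix (Fin 2 × Fin 2) (Fin 2 × Fin 2) ℂ} (h : ρ.IsHermitian) :
    (ptB ρ).IsHermitian := by
  ext b d
  simp only [conjTranspose_apply, _root_.ptB, star_sum, h.apply]

def IsXState (ρ : Matrix (Fin 2 × Fin 2) (Fin 2 × Fin 2) ℂ) : Prop :=
  ∀ i j, ρ i j ≠ 0 → i = j ∨ (i.1 ≠ j.1 ∧ i.2 ≠ j.2)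

lemma IsXState.apply_eq_zero {ρ : Matrix (Fin 2 × Fin 2) (Fin 2 × Fin 2) ℂ} (hX : IsXState ρ)
    {i j : Fin 2 × Fin 2} (hij : i ≠ j) (h : i.1 = j.1 ∨ i.2 = j.2) : ρ i j = 0 := by
  by_contra hne
  rcases hX i j hne with h' | ⟨h1, h2⟩
  · exact hij h'
  · exact h.elim h1 h2

local notation "τ" => Equiv.swap ((1 : Fin 2), (0 : Fin 2)) ((1 : Fin 2), (1 : Fin 2))

lemma Uswap_eq_permMatrix : Uswap = Equiv.Perm.permMatrix ℂ τ := by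
  ext i j
  simp [Uswap, PEquiv.toMatrix_apply, Equiv.swap_apply_eq_iff]

lemma IsXState.eigenGapSq_ptA_le {ρ : Matrix (Fin 2 × Fin 2) (Fin 2 × Fin 2) ℂ}
    (hX : IsXState ρ) : eigenGapSq (ptA ρ) ≤ eigenGapSq (ptA (ρ.submatrix τ τ)) := by
  have h₁ : ρ (0, 0) (1, 0) = 0 := hX.apply_eq_zero (by decide) (Or.inr rfl)
  have h₂ : ρ (0, 1) (1, 1) = 0 := hX.apply_eq_zero (by decide) (Or.inr rfl)
  simp only [eigenGapSq, ptA, Fin.isValue, Fin.sum_univ_two, Complex.add_re, h₁, h₂, add_zero,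
    map_zero, mul_zero, submatrix_apply, ne_eq, Prod.mk.injEq, zero_ne_one, false_and,
    not_false_eq_true, Equiv.swap_apply_of_ne_of_ne, Equiv.swap_apply_left,
    Equiv.swap_apply_right]
  nlinarith [Complex.normSq_nonneg (ρ (0, 0) (1, 1) + ρ (0, 1) (1, 0))]

lemma IsXState.eigenGapSq_ptB_le {ρ : Matrix (Fin 2 × Fin 2) (Fin 2 × Fin 2) ℂ}
    (hX : IsXState ρ) (h₂₂ : (ρ (0, 1) (0, 1)).re ≤ (ρ (0, 0) (0, 0)).re)
    (h₃₃ : (ρ (1, 0) (1, 0)).re ≤ (ρ (1, 1) (1, 1)).re) :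
    eigenGapSq (ptB ρ) ≤ eigenGapSq (ptB (ρ.submatrix τ τ)) := by
  have h₁ : ρ (0, 0) (0, 1) = 0 := hX.apply_eq_zero (by decide) (Or.inl rfl)
  have h₂ : ρ (1, 0) (1, 1) = 0 := hX.apply_eq_zero (by decide) (Or.inl rfl)
  have h₃ : ρ (1, 1) (1, 0) = 0 := hX.apply_eq_zero (by decide) (Or.inl rfl)
  simp only [eigenGapSq, ptB, Fin.isValue, Fin.sum_univ_two, Complex.add_re, h₁, h₂, h₃,
    add_zero, map_zero, mul_zero, submatrix_apply, ne_eq, Prod.mk.injEq, zero_ne_one, and_true,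
    not_false_eq_true, and_self, Equiv.swap_apply_of_ne_of_ne, Equiv.swap_apply_left,
    one_ne_zero, and_false, Equiv.swap_apply_right]
  nlinarith [mul_nonneg (sub_nonneg.2 h₂₂) (sub_nonneg.2 h₃₃)]

theorem capacity_gain_by_swap_general (ρ : Matrix (Fin 2 × Fin 2) (Fin 2 × Fin 2) ℂ)
    (hρ : ρ.PosSemidef)
    (hX : ∀ i j : Fin 2 × Fin 2, ρ i j ≠ 0 → i = j ∨ (i.1 ≠ j.1 ∧ i.2 ≠ j.2))
    (hord1 : (ρ (0, 0) (0, 0)).re ≥ (ρ (0, 1) (0, 1)).re)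
    (hord3 : (ρ (1, 1) (1, 1)).re > (ρ (1, 0) (1, 0)).re)
    (eA eB : ℝ) :
    Cap (ptA (Uswap * ρ * Uswapᴴ)) ((eA : ℂ) • σ3) ≥ Cap (ptA ρ) ((eA : ℂ) • σ3) ∧
    Cap (ptB (Uswap * ρ * Uswapᴴ)) ((eB : ℂ) • σ3) ≥ Cap (ptB ρ) ((eB : ℂ) • σ3) := by
  have hH : ρ.IsHermitian := hρ.1
  have hH' : (ρ.submatrix τ τ).IsHermitian := hH.submatrix τ
  have hσ3 (ε : ℝ) : ((ε : ℂ) • σ3).IsHermitian := isHermitian_σ3.smul (Complex.conj_ofReal ε)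
  rw [Uswap_eq_permMatrix, permMatrix_mul_mul_conjTranspose_permMatrix]
  exact ⟨Cap_le_Cap_of_eigenGapSq_le hH.ptA hH'.ptA (hσ3 eA) (IsXState.eigenGapSq_ptA_le hX),
    Cap_le_Cap_of_eigenGapSq_le hH.ptB hH'.ptB (hσ3 eB)
      (IsXState.eigenGapSq_ptB_le hX hord1 hord3.le)⟩

/-- Theorem 2: the swap unitary achieves subsystem capacity gain for a
two-qubit X-state with `ρ₁₁ ≥ ρ₂₂ ≥ ρ₄₄ > ρ₃₃`. -/
theorem capacity_gain_by_swap (ρ : Matrix (Fin 2 × Fin 2) (Fin 2 × Fin 2) ℂ)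
    (hρ : ρ.PosSemidef) (htr : ρ.trace = 1)
    (hX : ∀ i j : Fin 2 × Fin 2, ρ i j ≠ 0 → i = j ∨ (i.1 ≠ j.1 ∧ i.2 ≠ j.2))
    (hord1 : (ρ (0, 0) (0, 0)).re ≥ (ρ (0, 1) (0, 1)).re)
    (hord2 : (ρ (0, 1) (0, 1)).re ≥ (ρ (1, 1) (1, 1)).re)
    (hord3 : (ρ (1, 1) (1, 1)).re > (ρ (1, 0) (1, 0)).re)
    (eA eB : ℝ) (hA : 0 ≤ eA) (hB : 0 ≤ eB) :
    Cap (ptA (Uswap * ρ * Uswapᴴ)) ((eA : ℂ) • σ3) ≥ Cap (ptA ρ) ((eA : ℂ) • σ3) ∧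
    Cap (ptB (Uswap * ρ * Uswapᴴ)) ((eB : ℂ) • σ3) ≥ Cap (ptB ρ) ((eB : ℂ) • σ3) :=
  capacity_gain_by_swap_general ρ hρ hX hord1 hord3 eA eB
end
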